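/- If a chore transfer to the weighted least earner group N_λ (re-allocated internally via WPS) results in N_λ containing the new weighted big earner b', then the resulting allocation (y, p) is wpEF1: p_{-1}(y_{b'})/w_{b'} <= p(x_ℓ)/w_ℓ <= p(y_{ℓ'})/w_{ℓ'}, where ℓ is the old weighted least earner and ℓ' the new one, provided the weighted earning of the least earner never decreased. -/
import Mathlib


open Finset

attribute [local instance] Classical.propDecidable

/-- The agent picked by the weighted picking sequence algorithm when the current
chore-counts are `s`: an agent minimizing `s i / w i`, ties broken in favour of
the smaller index. -/
noncomputable def wpsPick {n : ℕ} [NeZero n] (w : Fin n → ℝ) (s : Fin n → ℕ) : Fin n :=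
  (Finset.univ.filter (fun i : Fin n => ∀ k : Fin n, (s i : ℝ) / w i ≤ (s k : ℝ) / w k)).min'
    (by
      obtain ⟨i, -, hi⟩ := Finset.exists_min_image Finset.univ
        (fun i : Fin n => (s i : ℝ) / w i) ⟨0, Finset.mem_univ 0⟩
      exact ⟨i, Finset.mem_filter.2 ⟨Finset.mem_univ i, fun k => hi k (Finset.mem_univ k)⟩⟩)

/-- Number of chores held by each agent after `t` rounds of the WPS algorithm. -/
noncomputable def wpsCounts {n : ℕ} [NeZero n] (w : Fin n → ℝ) : ℕ → Fin n → ℕ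
  | 0 => fun _ => 0
  | t + 1 => fun i => wpsCounts w t i + if wpsPick w (wpsCounts w t) = i then 1 else 0

/-- The agent receiving the `t`-th chore (0-indexed, chores sorted non-increasingly
by payment) in the WPS algorithm. -/
noncomputable def wpsSeq {n : ℕ} [NeZero n] (w : Fin n → ℝ) (t : ℕ) : Fin n :=
  wpsPick w (wpsCounts w t)

/-- The bundle (set of rounds/chore-ranks) received by agent `i` when `m` chores are
allocated by the WPS algorithm. -/
noncomputable def wpsBundle {n : ℕ} [NeZero n] (w : Fin n → ℝ) (m : ℕ) (i : Fin n) :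
    Finset ℕ :=
  (Finset.range m).filter (fun t => wpsSeq w t = i)

/-- `pm1 p S` is the payment of bundle `S` after removing its highest-paying chore,
i.e. `min_{j ∈ S} p (S \ {j})`, with the convention `pm1 p ∅ = 0`. -/
noncomputable def pm1 {χ : Type*} [DecidableEq χ] (p : χ → ℝ) (S : Finset χ) : ℝ :=
  if h : S.Nonempty then S.inf' h (fun j => ∑ c ∈ S.erase j, p c) else 0


set_option maxHeartbeats 1000000


lemma clamp_symm (A B C D : ℝ) (hAB : A ≤ B) (hCD : C ≤ D) :
    min B (max A D) - min B (max A C) = min D (max C B) - min D (max C A) := by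
  simp only [min_def, max_def]
  split_ifs <;> linarith

lemma sum_interval_compare (a b : ℕ) (c d : ℝ) (hc : 0 < c) (hd : 0 < d)
    (f g : ℕ → ℝ) (hg : ∀ s, 0 ≤ g s)
    (hab : (a : ℝ) * c ≤ (b : ℝ) * d)
    (hfg : ∀ r < a, ∀ s < b, (s : ℝ) * d < ((r : ℝ) + 1) * c → f r ≤ g s) :
    c * ∑ r ∈ range a, f r ≤ d * ∑ s ∈ range b, g s := by
  set L : ℕ → ℕ → ℝ := fun r s =>
    min (((r:ℝ)+1)*c) (max ((r:ℝ)*c) (((s:ℝ)+1)*d)) -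
    min (((r:ℝ)+1)*c) (max ((r:ℝ)*c) ((s:ℝ)*d)) with hLdef
  have hL0 : ∀ r s, 0 ≤ L r s := by
    intro r s
    apply sub_nonneg.2
    apply min_le_min le_rfl
    apply max_le_max le_rfl
    nlinarith
  have hLrow : ∀ r < a, ∑ s ∈ range b, L r s = c := by
    intro r hr
    have key := Finset.sum_range_sub
      (fun s => min (((r:ℝ)+1)*c) (max ((r:ℝ)*c) ((s:ℝ)*d))) b
    have e1 : ∀ s ∈ range b, L r s =
        (fun s : ℕ => min (((r:ℝ)+1)*c) (max ((r:ℝ)*c) ((s:ℝ)*d))) (s+1) -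
        (fun s : ℕ => min (((r:ℝ)+1)*c) (max ((r:ℝ)*c) ((s:ℝ)*d))) s := by
      intro s _
      simp only [hLdef]
      push_cast
      ring_nf
    rw [Finset.sum_congr rfl e1, key]
    have hra : ((r:ℝ)+1) ≤ (a:ℝ) := by exact_mod_cast Nat.succ_le_of_lt hr
    have h1 : ((r:ℝ)+1)*c ≤ (b:ℝ)*d := by nlinarith
    have h2 : ((r:ℝ))*c ≤ (b:ℝ)*d := by nlinarith
    have h3 : (0:ℝ) ≤ (r:ℝ)*c := by positivity
    simp only [Nat.cast_zero, zero_mul]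
    rw [max_eq_right h2, min_eq_left h1, max_eq_left h3, min_eq_right (by nlinarith)]
    ring
  have hLcol : ∀ s : ℕ, ∑ r ∈ range a, L r s ≤ d := by
    intro s
    have e1 : ∀ r ∈ range a, L r s =
        (fun r : ℕ => min (((s:ℝ)+1)*d) (max ((s:ℝ)*d) ((r:ℝ)*c))) (r+1) -
        (fun r : ℕ => min (((s:ℝ)+1)*d) (max ((s:ℝ)*d) ((r:ℝ)*c))) r := by
      intro r _
      simp only [hLdef]
      have := clamp_symm ((r:ℝ)*c) (((r:ℝ)+1)*c) ((s:ℝ)*d) (((s:ℝ)+1)*d)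
        (by nlinarith) (by nlinarith)
      push_cast
      linarith [this]
    rw [Finset.sum_congr rfl e1, Finset.sum_range_sub
      (fun r : ℕ => min (((s:ℝ)+1)*d) (max ((s:ℝ)*d) ((r:ℝ)*c))) a]
    have h1 : (fun r : ℕ => min (((s:ℝ)+1)*d) (max ((s:ℝ)*d) ((r:ℝ)*c))) a ≤ ((s:ℝ)+1)*d :=
      min_le_left _ _
    have h2 : (s:ℝ)*d ≤ (fun r : ℕ => min (((s:ℝ)+1)*d) (max ((s:ℝ)*d) ((r:ℝ)*c))) 0 :=
      le_min (by nlinarith) (le_max_left _ _)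
    simp only at h1 h2 ⊢
    linarith
  have hLzero : ∀ r s : ℕ, ¬((s:ℝ)*d < ((r:ℝ)+1)*c) → L r s = 0 := by
    intro r s h
    push_neg at h
    have h1 : ((r:ℝ))*c ≤ (s:ℝ)*d := by nlinarith
    have h2 : ((r:ℝ))*c ≤ ((s:ℝ)+1)*d := by nlinarith
    have h3 : (s:ℝ)*d ≤ ((s:ℝ)+1)*d := by nlinarith
    have h4 : ((r:ℝ)+1)*c ≤ ((s:ℝ)+1)*d := le_trans h h3
    simp only [hLdef, max_eq_right h1, max_eq_right h2, min_eq_left h, min_eq_left h4]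
    ring
  calc c * ∑ r ∈ range a, f r = ∑ r ∈ range a, (∑ s ∈ range b, L r s) * f r := by
        rw [Finset.mul_sum]
        exact Finset.sum_congr rfl (fun r hr => by rw [hLrow r (mem_range.mp hr)])
    _ = ∑ r ∈ range a, ∑ s ∈ range b, L r s * f r := by
        exact Finset.sum_congr rfl (fun r _ => Finset.sum_mul _ _ _)
    _ ≤ ∑ r ∈ range a, ∑ s ∈ range b, L r s * g s := by
        apply Finset.sum_le_sum
        intro r hr
        apply Finset.sum_le_sum
        intro s hs
        rcases eq_or_lt_of_le (hL0 r s) with h | h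
        · rw [← h]; simp
        · have hov : (s:ℝ)*d < ((r:ℝ)+1)*c := by
            by_contra hcon
            rw [hLzero r s hcon] at h
            exact lt_irrefl _ h
          exact mul_le_mul_of_nonneg_left
            (hfg r (mem_range.mp hr) s (mem_range.mp hs) hov) (hL0 r s)
    _ = ∑ s ∈ range b, (∑ r ∈ range a, L r s) * g s := by
        rw [Finset.sum_comm]
        exact Finset.sum_congr rfl (fun s _ => (Finset.sum_mul _ _ _).symm)
    _ ≤ ∑ s ∈ range b, d * g s := by
        apply Finset.sum_le_sum
        intro s _
        exact mul_le_mul_of_nonneg_right (hLcol s) (hg s)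
    _ = d * ∑ s ∈ range b, g s := by rw [Finset.mul_sum]

section WPS
variable {n : ℕ} [NeZero n] (w : Fin n → ℝ)

/-- The round at which agent `i` receives its `(r+1)`-st chore. -/
noncomputable def wpsTime (w : Fin n → ℝ) (i : Fin n) (r : ℕ) : ℕ :=
  sInf {t | r < wpsCounts w (t + 1) i}

lemma wpsPick_min (s : Fin n → ℕ) (k : Fin n) :
    (s (wpsPick w s) : ℝ) / w (wpsPick w s) ≤ (s k : ℝ) / w k := by
  have h : wpsPick w s ∈ Finset.univ.filter
      (fun i : Fin n => ∀ k : Fin n, (s i : ℝ) / w i ≤ (s k : ℝ) / w k) :=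
    Finset.min'_mem _ _
  exact (Finset.mem_filter.mp h).2 k

lemma wpsSeq_min (t : ℕ) (k : Fin n) :
    (wpsCounts w t (wpsSeq w t) : ℝ) / w (wpsSeq w t)
      ≤ (wpsCounts w t k : ℝ) / w k :=
  wpsPick_min w (wpsCounts w t) k

lemma wpsCounts_succ (t : ℕ) (i : Fin n) :
    wpsCounts w (t + 1) i = wpsCounts w t i + if wpsSeq w t = i then 1 else 0 := rfl

lemma wpsCounts_le_succ (t : ℕ) (i : Fin n) :
    wpsCounts w (t + 1) i ≤ wpsCounts w t i + 1 := by
  rw [wpsCounts_succ]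
  split <;> omega

lemma wpsCounts_mono {s t : ℕ} (h : s ≤ t) (i : Fin n) :
    wpsCounts w s i ≤ wpsCounts w t i := by
  induction t with
  | zero => rw [Nat.le_zero.mp h]
  | succ t ih =>
    by_cases h' : s = t + 1
    · rw [h']
    · have hs : s ≤ t := by omega
      calc wpsCounts w s i ≤ wpsCounts w t i := ih hs
        _ ≤ wpsCounts w (t + 1) i := by rw [wpsCounts_succ]; omega

lemma wpsBundle_succ (m : ℕ) (i : Fin n) :
    wpsBundle w (m + 1) i =
      if wpsSeq w m = i then insert m (wpsBundle w m i) else wpsBundle w m i := by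
  simp only [wpsBundle, Finset.range_add_one, Finset.filter_insert]

lemma wpsCounts_eq_card (t : ℕ) (i : Fin n) :
    wpsCounts w t i = (wpsBundle w t i).card := by
  induction t with
  | zero => simp [wpsCounts, wpsBundle]
  | succ t ih =>
    by_cases h : wpsSeq w t = i
    · rw [wpsBundle_succ, wpsCounts_succ, if_pos h, if_pos h,
        Finset.card_insert_of_notMem (by simp [wpsBundle]), ih]
    · rw [wpsBundle_succ, wpsCounts_succ, if_neg h, if_neg h, ih, Nat.add_zero]

lemma wpsTime_spec {m : ℕ} {i : Fin n} {r : ℕ} (h : r < wpsCounts w (m + 1) i) :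
    wpsCounts w (wpsTime w i r) i = r ∧ wpsSeq w (wpsTime w i r) = i ∧
      wpsCounts w (wpsTime w i r + 1) i = r + 1 ∧ wpsTime w i r ≤ m := by
  have hne : {t | r < wpsCounts w (t + 1) i}.Nonempty := ⟨m, h⟩
  have hmem : r < wpsCounts w (wpsTime w i r + 1) i := Nat.sInf_mem hne
  have hle : wpsTime w i r ≤ m := Nat.sInf_le h
  have hlow : wpsCounts w (wpsTime w i r) i ≤ r := by
    rcases Nat.eq_zero_or_pos (wpsTime w i r) with h0 | h0
    · rw [h0]; simp [wpsCounts]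
    · have h1 : wpsTime w i r - 1 < wpsTime w i r := by omega
      have h2 : wpsTime w i r - 1 ∉ {t | r < wpsCounts w (t + 1) i} :=
        Nat.notMem_of_lt_sInf h1
      simp only [Set.mem_setOf_eq, not_lt] at h2
      have e : wpsTime w i r - 1 + 1 = wpsTime w i r := by omega
      rwa [e] at h2
  have hsucc := wpsCounts_le_succ w (wpsTime w i r) i
  have hcnt : wpsCounts w (wpsTime w i r) i = r := by omega
  have hcnt1 : wpsCounts w (wpsTime w i r + 1) i = r + 1 := by omega
  refine ⟨hcnt, ?_, hcnt1, hle⟩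
  have := wpsCounts_succ w (wpsTime w i r) i
  by_contra hseq
  rw [if_neg hseq] at this
  omega

lemma sum_wpsBundle (f : ℕ → ℝ) (m : ℕ) (i : Fin n) :
    ∑ t ∈ wpsBundle w m i, f t
      = ∑ r ∈ range (wpsCounts w m i), f (wpsTime w i r) := by
  induction m with
  | zero => simp [wpsBundle, wpsCounts]
  | succ m ih =>
    by_cases h : wpsSeq w m = i
    · rw [wpsBundle_succ, wpsCounts_succ, if_pos h, if_pos h]
      have hτ : wpsTime w i (wpsCounts w m i) = m := by
        apply le_antisymm
        · exact Nat.sInf_le (by simp only [Set.mem_setOf_eq, wpsCounts_succ, if_pos h]; omega)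
        · by_contra h'
          push_neg at h'
          have hmem : wpsTime w i (wpsCounts w m i)
              ∈ {t | wpsCounts w m i < wpsCounts w (t + 1) i} :=
            Nat.sInf_mem ⟨m, by simp only [Set.mem_setOf_eq, wpsCounts_succ, if_pos h]; omega⟩
          simp only [Set.mem_setOf_eq] at hmem
          have := wpsCounts_mono w (show wpsTime w i (wpsCounts w m i) + 1 ≤ m by omega) i
          omega
      rw [Finset.sum_insert (by simp [wpsBundle]), Finset.sum_range_succ, ih, hτ]
      ring
    · rw [wpsBundle_succ, wpsCounts_succ, if_neg h, if_neg h, ih, Nat.add_zero]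


lemma pm1_le_sum (q : ℕ → ℝ) (m : ℕ) (i : Fin n) :
    pm1 q (wpsBundle w (m + 1) i)
      ≤ ∑ ρ ∈ range (wpsCounts w (m + 1) i - 1), q (wpsTime w i (ρ + 1)) := by
  rcases Nat.eq_zero_or_pos (wpsCounts w (m + 1) i) with h0 | h0
  · have hcard := wpsCounts_eq_card w (m + 1) i
    have hempty : wpsBundle w (m + 1) i = ∅ := Finset.card_eq_zero.mp (by omega)
    rw [hempty, h0]
    simp [pm1]
  · obtain ⟨hc0, hs0, -, hle0⟩ := wpsTime_spec w (show 0 < wpsCounts w (m + 1) i from h0)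
    have hmem : wpsTime w i 0 ∈ wpsBundle w (m + 1) i := by
      simp only [wpsBundle, Finset.mem_filter, Finset.mem_range]
      exact ⟨by omega, hs0⟩
    have hne : (wpsBundle w (m + 1) i).Nonempty := ⟨_, hmem⟩
    unfold pm1
    rw [dif_pos hne]
    refine le_trans (Finset.inf'_le _ hmem) ?_
    rw [Finset.sum_erase_eq_sub hmem, sum_wpsBundle]
    obtain ⟨a', ha'⟩ : ∃ a', wpsCounts w (m + 1) i = a' + 1 :=
      ⟨_, (Nat.succ_pred_eq_of_pos h0).symm⟩
    rw [ha', Finset.sum_range_succ', Nat.add_sub_cancel]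
    simp

lemma wps_key (hw : ∀ i, 0 < w i) (q : ℕ → ℝ) (hq : ∀ t, 0 ≤ q t)
    (hsorted : ∀ s t : ℕ, s ≤ t → q t ≤ q s) (m : ℕ) (h i : Fin n) :
    (∑ ρ ∈ range (wpsCounts w (m + 1) h - 1), q (wpsTime w h (ρ + 1))) / w h
      ≤ (∑ s ∈ range (wpsCounts w m i), q (wpsTime w i s + 1)) / w i := by
  have hwh := hw h
  have hwi := hw i
  have hab : ((wpsCounts w (m + 1) h - 1 : ℕ) : ℝ) * (1 / w h)
      ≤ ((wpsCounts w m i : ℕ) : ℝ) * (1 / w i) := by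
    rcases Nat.eq_zero_or_pos (wpsCounts w (m + 1) h) with h0 | h0
    · rw [h0]
      simp only [Nat.zero_sub, Nat.cast_zero, zero_mul]
      positivity
    · have hr : wpsCounts w (m + 1) h - 1 < wpsCounts w (m + 1) h := by omega
      obtain ⟨hc, hs, -, hle⟩ := wpsTime_spec w hr
      have hpick := wpsSeq_min w (wpsTime w h (wpsCounts w (m + 1) h - 1)) i
      rw [hs, hc] at hpick
      have hmono : wpsCounts w (wpsTime w h (wpsCounts w (m + 1) h - 1)) i
          ≤ wpsCounts w m i := wpsCounts_mono w hle i
      have hmono' : (wpsCounts w (wpsTime w h (wpsCounts w (m + 1) h - 1)) i : ℝ)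
          ≤ (wpsCounts w m i : ℝ) := by exact_mod_cast hmono
      have h2 : (wpsCounts w (wpsTime w h (wpsCounts w (m + 1) h - 1)) i : ℝ) / w i
          ≤ (wpsCounts w m i : ℝ) / w i := by
        apply div_le_div_of_nonneg_right hmono' hwi.le
      calc ((wpsCounts w (m + 1) h - 1 : ℕ) : ℝ) * (1 / w h)
          = ((wpsCounts w (m + 1) h - 1 : ℕ) : ℝ) / w h := by ring
        _ ≤ (wpsCounts w m i : ℝ) / w i := le_trans hpick h2
        _ = ((wpsCounts w m i : ℕ) : ℝ) * (1 / w i) := by ring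
  have hfg : ∀ ρ < wpsCounts w (m + 1) h - 1, ∀ s < wpsCounts w m i,
      (s : ℝ) * (1 / w i) < ((ρ : ℝ) + 1) * (1 / w h) →
      q (wpsTime w h (ρ + 1)) ≤ q (wpsTime w i s + 1) := by
    intro ρ hρ s hs hlt
    have hr1 : ρ + 1 < wpsCounts w (m + 1) h := by omega
    obtain ⟨hc, hseq, -, -⟩ := wpsTime_spec w hr1
    have hpick := wpsSeq_min w (wpsTime w h (ρ + 1)) i
    rw [hseq, hc] at hpick
    have hlt2 : (s : ℝ) / w i < (wpsCounts w (wpsTime w h (ρ + 1)) i : ℝ) / w i := by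
      have e1 : (s : ℝ) / w i = (s : ℝ) * (1 / w i) := by ring
      have e2 : ((ρ + 1 : ℕ) : ℝ) / w h = ((ρ : ℝ) + 1) * (1 / w h) := by push_cast; ring
      rw [e1]
      calc (s : ℝ) * (1 / w i) < ((ρ : ℝ) + 1) * (1 / w h) := hlt
        _ = ((ρ + 1 : ℕ) : ℝ) / w h := e2.symm
        _ ≤ _ := hpick
    have hsc : s < wpsCounts w (wpsTime w h (ρ + 1)) i := by
      have := (div_lt_div_iff_of_pos_right hwi).mp hlt2
      exact_mod_cast this
    have ht0 : 0 < wpsTime w h (ρ + 1) := by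
      rcases Nat.eq_zero_or_pos (wpsTime w h (ρ + 1)) with h0 | h0
      · rw [h0] at hsc
        simp [wpsCounts] at hsc
      · exact h0
    have hτs : wpsTime w i s + 1 ≤ wpsTime w h (ρ + 1) := by
      have hmem : wpsTime w h (ρ + 1) - 1 ∈ {t | s < wpsCounts w (t + 1) i} := by
        simp only [Set.mem_setOf_eq]
        have e : wpsTime w h (ρ + 1) - 1 + 1 = wpsTime w h (ρ + 1) := by omega
        rw [e]
        exact hsc
      have h5 := Nat.sInf_le hmem
      have heq : wpsTime w i s = sInf {t | s < wpsCounts w (t + 1) i} := rfl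
      omega
    exact hsorted _ _ hτs
  have main := sum_interval_compare (wpsCounts w (m + 1) h - 1) (wpsCounts w m i)
    (1 / w h) (1 / w i) (by positivity) (by positivity)
    (fun ρ => q (wpsTime w h (ρ + 1))) (fun s => q (wpsTime w i s + 1))
    (fun s => hq _) hab hfg
  calc (∑ ρ ∈ range (wpsCounts w (m + 1) h - 1), q (wpsTime w h (ρ + 1))) / w h
      = (1 / w h) * ∑ ρ ∈ range (wpsCounts w (m + 1) h - 1), q (wpsTime w h (ρ + 1)) := by
        ring
    _ ≤ (1 / w i) * ∑ s ∈ range (wpsCounts w m i), q (wpsTime w i s + 1) := main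
    _ = (∑ s ∈ range (wpsCounts w m i), q (wpsTime w i s + 1)) / w i := by ring

end WPS

/-- A chore is transferred to the weighted least earner group `N_λ` (agents `Fin n`,
identical type, re-allocated internally by WPS).  Before the transfer the group's
chores, in sorted order, have payments `t ↦ q (if t < j then t else t+1)` (`m` chores,
allocation `x`); after the transfer they are `0,…,m` with payments `q 0 ≥ … ≥ q m ≥ 0`
(allocation `y`), the new chore having rank `j`.  The remaining agents `Fin k` keep
their bundles, with weighted data: weights `v`, earnings `E`, earnings-up-to-one-chore
`F`.  If the new weighted big earner `b'` lies in `N_λ`, `ℓ ∈ N_λ` is the old weighted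
least earner, `ℓ'` is the new weighted least earner, and the weighted earning of the
least earner did not decrease, then the resulting allocation is wpEF1:
`pm1(y_{b'})/w_{b'} ≤ p(x_ℓ)/w_ℓ ≤ p(y_{ℓ'})/w_{ℓ'}`. -/
theorem transfer_to_least_earner_group_wpEF1 {n k : ℕ} [NeZero n]
    (w : Fin n → ℝ) (hw : ∀ i, 0 < w i) (v : Fin k → ℝ) (hv : ∀ a, 0 < v a)
    (m j : ℕ) (hj : j < m + 1) (q : ℕ → ℝ) (hq : ∀ t, 0 ≤ q t)
    (hsorted : ∀ s t : ℕ, s ≤ t → q t ≤ q s)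
    (E F : Fin k → ℝ) (hFE : ∀ a, 0 ≤ F a ∧ F a ≤ E a)
    (b' ℓ : Fin n) (ℓ' : Fin n ⊕ Fin k)
    -- `b'` is the new weighted big earner (and lies in the group `N_λ`):
    (hb' : ∀ a : Fin n ⊕ Fin k,
      Sum.elim (fun i => pm1 q (wpsBundle w (m + 1) i)) F a / Sum.elim w v a
        ≤ pm1 q (wpsBundle w (m + 1) b') / w b')
    -- `ℓ'` is the new weighted least earner:
    (hℓ' : ∀ a : Fin n ⊕ Fin k,
      Sum.elim (fun i => ∑ t ∈ wpsBundle w (m + 1) i, q t) E ℓ' / Sum.elim w v ℓ'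
        ≤ Sum.elim (fun i => ∑ t ∈ wpsBundle w (m + 1) i, q t) E a / Sum.elim w v a)
    -- the weighted earning of the weighted least earner never decreased:
    (hnd : (∑ t ∈ wpsBundle w m ℓ, q (if t < j then t else t + 1)) / w ℓ
        ≤ Sum.elim (fun i => ∑ t ∈ wpsBundle w (m + 1) i, q t) E ℓ' / Sum.elim w v ℓ') :
    (pm1 q (wpsBundle w (m + 1) b') / w b'
        ≤ (∑ t ∈ wpsBundle w m ℓ, q (if t < j then t else t + 1)) / w ℓ)
    ∧ ∀ a b : Fin n ⊕ Fin k,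
        Sum.elim (fun i => pm1 q (wpsBundle w (m + 1) i)) F a / Sum.elim w v a
          ≤ Sum.elim (fun i => ∑ t ∈ wpsBundle w (m + 1) i, q t) E b / Sum.elim w v b := by
  have hwb := hw b'
  have hwl := hw ℓ
  have hP : (∑ s ∈ range (wpsCounts w m ℓ), q (wpsTime w ℓ s + 1))
      ≤ ∑ t ∈ wpsBundle w m ℓ, q (if t < j then t else t + 1) := by
    rw [sum_wpsBundle w (fun t => q (if t < j then t else t + 1)) m ℓ]
    apply Finset.sum_le_sum
    intro s _
    apply hsorted
    split <;> omega
  have hpm := pm1_le_sum w q m b'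
  have hkey := wps_key w hw q hq hsorted m b' ℓ
  have part1 : pm1 q (wpsBundle w (m + 1) b') / w b'
      ≤ (∑ t ∈ wpsBundle w m ℓ, q (if t < j then t else t + 1)) / w ℓ := by
    have h1 : pm1 q (wpsBundle w (m + 1) b') / w b'
        ≤ (∑ ρ ∈ range (wpsCounts w (m + 1) b' - 1), q (wpsTime w b' (ρ + 1))) / w b' :=
      div_le_div_of_nonneg_right hpm hwb.le
    have h2 : (∑ s ∈ range (wpsCounts w m ℓ), q (wpsTime w ℓ s + 1)) / w ℓ
        ≤ (∑ t ∈ wpsBundle w m ℓ, q (if t < j then t else t + 1)) / w ℓ :=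
      div_le_div_of_nonneg_right hP hwl.le
    linarith
  refine ⟨part1, ?_⟩
  intro A B
  have h1 := hb' A
  have h2 := hℓ' B
  linarith
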